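/- Every obligation language is recognized by a deterministic weak Büchi automaton: if L ⊆ Σ^ω is a finite Boolean combination of safety languages and guarantee languages (where a safety language is one whose complement is of the form W·Σ^ω for some W ⊆ Σ*, and a guarantee language is one of the form W·Σ^ω), and each of the constituent safety and guarantee languages is ω-regular, then L is recognized by some deterministic weak Büchi automaton. -/

import Mathlib

/-- A complete deterministic Büchi automaton over alphabet `A` with states `Q`. -/
structure DBA (Q A : Type) where
  init : Q
  step : Q → A → Q
  F : Set Q

namespace DBA

variable {Q A : Type}

/-- Extension of the transition function to finite words. -/
def stepList (M : DBA Q A) : Q → List A → Q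
  | q, [] => q
  | q, a :: u => M.stepList (M.step q a) u

/-- `q` is reachable from `p`. -/
def Reach (M : DBA Q A) (p q : Q) : Prop := ∃ u : List A, M.stepList p u = q

/-- `p` and `q` are in the same strongly connected component. -/
def SameSCC (M : DBA Q A) (p q : Q) : Prop := M.Reach p q ∧ M.Reach q p

/-- `q` lies on a cycle (i.e. its SCC is non-trivial). -/
def OnCycle (M : DBA Q A) (q : Q) : Prop := ∃ u : List A, u ≠ [] ∧ M.stepList q u = q

/-- Weakness: every SCC is entirely accepting or entirely rejecting. -/
def Weak (M : DBA Q A) : Prop := ∀ p q, M.SameSCC p q → (p ∈ M.F ↔ q ∈ M.F)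

/-- The (unique) run on `w` starting in state `q`. -/
def runFrom (M : DBA Q A) (q : Q) (w : ℕ → A) : ℕ → Q
  | 0 => q
  | n + 1 => M.step (M.runFrom q w n) (w n)

/-- Büchi acceptance from state `q`: the run visits `F` infinitely often. -/
def AcceptsFrom (M : DBA Q A) (q : Q) (w : ℕ → A) : Prop :=
  ∀ N, ∃ n, N ≤ n ∧ M.runFrom q w n ∈ M.F

/-- Büchi acceptance from the initial state. -/
def Accepts (M : DBA Q A) (w : ℕ → A) : Prop := M.AcceptsFrom M.init w

/-- The ω-language of state `q`. -/
def LangFrom (M : DBA Q A) (q : Q) : Set (ℕ → A) := {w | M.AcceptsFrom q w}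

/-- The ω-language of the automaton. -/
def Lang (M : DBA Q A) : Set (ℕ → A) := {w | M.Accepts w}

/-- `q` is an accepting sink. -/
def AcceptingSink (M : DBA Q A) (q : Q) : Prop := q ∈ M.F ∧ ∀ a, M.step q a = q

/-- Minimality: all states are reachable and no two distinct states are
language-equivalent. -/
def Minimal (M : DBA Q A) : Prop :=
  (∀ q, M.Reach M.init q) ∧ ∀ p q, M.LangFrom p = M.LangFrom q → p = q

/-- Product automaton with a chosen acceptance set. -/
def prod (M₁ : DBA Q A) {Q₂ : Type} (M₂ : DBA Q₂ A) (Fp : Set (Q × Q₂)) :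
    DBA (Q × Q₂) A :=
  ⟨(M₁.init, M₂.init), fun q a => (M₁.step q.1 a, M₂.step q.2 a), Fp⟩

/-- A ranking in the sense of Löding: constant on SCCs, non-increasing along
transitions, and with parity matching acceptance on states lying on cycles. -/
def IsRanking (M : DBA Q A) (r : Q → ℕ) : Prop :=
  (∀ p q, M.SameSCC p q → r p = r q) ∧
  (∀ q a, r (M.step q a) ≤ r q) ∧
  (∀ q, M.OnCycle q → (Even (r q) ↔ q ∈ M.F))

end DBA

/-- Recognizability by a (finite) deterministic weak Büchi automaton. -/
def DWARecognizable {A : Type} (L : Set (ℕ → A)) : Prop :=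
  ∃ (Q : Type) (_ : Fintype Q) (M : DBA Q A), M.Weak ∧ ∀ w, M.Accepts w ↔ w ∈ L

/-- Nondeterministic Büchi automata. -/
structure NBA (Q A : Type) where
  init : Set Q
  step : Q → A → Set Q
  F : Set Q

/-- Acceptance for nondeterministic Büchi automata. -/
def NBA.Accepts {Q A : Type} (M : NBA Q A) (w : ℕ → A) : Prop :=
  ∃ r : ℕ → Q, r 0 ∈ M.init ∧ (∀ n, r (n + 1) ∈ M.step (r n) (w n)) ∧
    ∀ N, ∃ n, N ≤ n ∧ r n ∈ M.F

/-- ω-regularity: recognizability by a finite nondeterministic Büchi automaton. -/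
def OmegaRegular {A : Type} (L : Set (ℕ → A)) : Prop :=
  ∃ (Q : Type) (_ : Fintype Q) (M : NBA Q A), ∀ w, M.Accepts w ↔ w ∈ L

/-- Guarantee languages: `W·Σ^ω` for a set `W` of finite words. -/
def IsGuaranteeLang {A : Type} (L : Set (ℕ → A)) : Prop :=
  ∃ W : Set (List A), L = {w | ∃ n : ℕ, (List.ofFn fun i : Fin n => w i) ∈ W}

/-- Safety languages: complements of guarantee languages. -/
def IsSafetyLang {A : Type} (L : Set (ℕ → A)) : Prop := IsGuaranteeLang Lᶜ

/-- Finite Boolean combinations (union, intersection, complement) of a family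
of languages. -/
inductive BoolCombOf {α : Type} (B : Set (Set α)) : Set α → Prop
  | base {L} : L ∈ B → BoolCombOf B L
  | compl {L} : BoolCombOf B L → BoolCombOf B Lᶜ
  | union {L₁ L₂} : BoolCombOf B L₁ → BoolCombOf B L₂ → BoolCombOf B (L₁ ∪ L₂)
  | inter {L₁ L₂} : BoolCombOf B L₁ → BoolCombOf B L₂ → BoolCombOf B (L₁ ∩ L₂)

/-!
A weak automaton with finitely many states accepts a word iff its run eventually stays in the
accepting set: a run visiting an accepting and a rejecting state infinitely often would find both
in one SCC. Hence complementing the accepting set complements the language, and products give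
unions. For a guarantee language `W·Σ^ω` recognized by a Büchi automaton, run its subset
construction and accept in the states all of whose continuations are accepted; these states are
closed under transitions, so the automaton is weak, and a word lies in `W·Σ^ω` iff one of its
prefixes has only accepted continuations. Safety languages reduce to this case by complementing.
-/

open Filter

theorem Filter.Frequently.exists_frequently_eq {α β : Type*} [Finite β] {l : Filter α}
    {f : α → β} {s : Set β} (h : ∃ᶠ x in l, f x ∈ s) : ∃ b ∈ s, ∃ᶠ x in l, f x = b := by
  obtain ⟨b, hb⟩ := frequently_exists.1 (h.mono fun x hx => ⟨f x, hx, rfl⟩ :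
    ∃ᶠ x in l, ∃ b, b ∈ s ∧ f x = b)
  exact ⟨b, hb.exists.choose_spec.1, hb.mono fun _ => And.right⟩

-- `Stream' A` is `ℕ → A` by definition; it is used wherever the `Stream'` API on prefixes helps.
theorem Stream'.ofFn_eq_take {A : Type*} (n : ℕ) (w : Stream' A) :
    List.ofFn (fun i : Fin n => w i) = w.take n :=
  List.ext_getElem (by simp) fun i _ _ => by simp; rfl

theorem IsGuaranteeLang.mem_iff_exists_forall_append {A : Type} {L : Set (Stream' A)}
    (hL : IsGuaranteeLang L) (w : Stream' A) :
    w ∈ L ↔ ∃ n, ∀ w', w.take n ++ₛ w' ∈ L := by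
  obtain ⟨W, rfl⟩ := hL
  refine ⟨fun ⟨n, hn⟩ => ⟨n, fun w' => ⟨n, ?_⟩⟩, fun ⟨n, hn⟩ => ?_⟩
  · rwa [Stream'.ofFn_eq_take, Stream'.take_append_of_le_length n _ w' (by simp),
      List.take_of_length_le (by simp), ← Stream'.ofFn_eq_take]
  · simpa using hn (w.drop n)

namespace DBA

variable {Q A : Type}

theorem stepList_append (M : DBA Q A) (q : Q) (u v : List A) :
    M.stepList q (u ++ v) = M.stepList (M.stepList q u) v := by
  induction u generalizing q with
  | nil => rfl
  | cons a u ih => exact ih _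

theorem Reach.trans {M : DBA Q A} {p q r : Q} (h₁ : M.Reach p q) (h₂ : M.Reach q r) :
    M.Reach p r := by
  obtain ⟨u, rfl⟩ := h₁
  obtain ⟨v, rfl⟩ := h₂
  exact ⟨u ++ v, M.stepList_append p u v⟩

theorem reach_runFrom (M : DBA Q A) (q : Q) (w : ℕ → A) {m n : ℕ} (h : m ≤ n) :
    M.Reach (M.runFrom q w m) (M.runFrom q w n) := by
  induction n, h using Nat.le_induction with
  | base => exact ⟨[], rfl⟩
  | succ n _ ih => exact ih.trans ⟨[w n], rfl⟩

theorem mem_of_reach {M : DBA Q A} {T : Set Q} (hT : ∀ q a, q ∈ T → M.step q a ∈ T)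
    {p q : Q} (h : M.Reach p q) (hp : p ∈ T) : q ∈ T := by
  obtain ⟨u, rfl⟩ := h
  induction u generalizing p with
  | nil => exact hp
  | cons a u ih => exact ih (hT _ _ hp)

theorem weak_of_forall_step_mem {M : DBA Q A} (hF : ∀ q a, q ∈ M.F → M.step q a ∈ M.F) :
    M.Weak :=
  fun _ _ h => ⟨mem_of_reach hF h.1, mem_of_reach hF h.2⟩

theorem acceptsFrom_iff_frequently (M : DBA Q A) (q : Q) (w : ℕ → A) :
    M.AcceptsFrom q w ↔ ∃ᶠ n in atTop, M.runFrom q w n ∈ M.F :=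
  frequently_atTop.symm

theorem acceptsFrom_iff_exists_of_forall_step_mem {M : DBA Q A}
    (hF : ∀ q a, q ∈ M.F → M.step q a ∈ M.F) (q : Q) (w : ℕ → A) :
    M.AcceptsFrom q w ↔ ∃ n, M.runFrom q w n ∈ M.F := by
  rw [acceptsFrom_iff_frequently]
  refine ⟨Frequently.exists, fun ⟨n, hn⟩ => Eventually.frequently ?_⟩
  exact eventually_atTop.2 ⟨n, fun m hm => mem_of_reach hF (M.reach_runFrom q w hm) hn⟩

theorem sameSCC_of_frequently_runFrom_eq (M : DBA Q A) {q : Q} {w : ℕ → A} {p p' : Q}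
    (hp : ∃ᶠ n in atTop, M.runFrom q w n = p) (hp' : ∃ᶠ n in atTop, M.runFrom q w n = p') :
    M.SameSCC p p' := by
  obtain ⟨n₁, -, rfl⟩ := frequently_atTop.1 hp 0
  obtain ⟨n₂, h₁₂, rfl⟩ := frequently_atTop.1 hp' n₁
  obtain ⟨n₃, h₂₃, h₃⟩ := frequently_atTop.1 hp n₂
  exact ⟨M.reach_runFrom q w h₁₂, h₃ ▸ M.reach_runFrom q w h₂₃⟩

theorem Weak.eventually_mem_of_frequently_mem [Finite Q] {M : DBA Q A} (hM : M.Weak) {q : Q}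
    {w : ℕ → A} (h : ∃ᶠ n in atTop, M.runFrom q w n ∈ M.F) :
    ∀ᶠ n in atTop, M.runFrom q w n ∈ M.F := by
  by_contra hne
  obtain ⟨p, hpF, hp⟩ := h.exists_frequently_eq
  obtain ⟨p', hp'F, hp'⟩ := (not_eventually.1 hne).exists_frequently_eq (s := M.Fᶜ)
  exact hp'F ((hM p p' (M.sameSCC_of_frequently_runFrom_eq hp hp')).1 hpF)

theorem stepList_mk_step (M : DBA Q A) (F : Set Q) :
    (DBA.mk M.init M.step F).stepList = M.stepList := by
  funext q u
  induction u generalizing q with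
  | nil => rfl
  | cons a u ih => exact ih _

theorem runFrom_mk_step (M : DBA Q A) (F : Set Q) :
    (DBA.mk M.init M.step F).runFrom = M.runFrom := by
  funext q w n
  induction n with
  | zero => rfl
  | succ n ih => simp only [runFrom, ih]

theorem Weak.compl {M : DBA Q A} (hM : M.Weak) : (DBA.mk M.init M.step M.Fᶜ).Weak := by
  simp only [Weak, SameSCC, Reach, stepList_mk_step]
  exact fun p q h => not_congr (hM p q h)

theorem Weak.accepts_compl_iff [Finite Q] {M : DBA Q A} (hM : M.Weak) (w : ℕ → A) :
    (DBA.mk M.init M.step M.Fᶜ).Accepts w ↔ ¬ M.Accepts w := by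
  simp only [Accepts, acceptsFrom_iff_frequently, runFrom_mk_step]
  exact not_eventually.symm.trans
    (not_congr ⟨Eventually.frequently, hM.eventually_mem_of_frequently_mem⟩)

variable {Q₂ : Type}

theorem prod_stepList (M₁ : DBA Q A) (M₂ : DBA Q₂ A) (Fp : Set (Q × Q₂)) (p : Q × Q₂)
    (u : List A) : (M₁.prod M₂ Fp).stepList p u = (M₁.stepList p.1 u, M₂.stepList p.2 u) := by
  induction u generalizing p with
  | nil => rfl
  | cons a u ih => exact ih _

theorem prod_runFrom (M₁ : DBA Q A) (M₂ : DBA Q₂ A) (Fp : Set (Q × Q₂)) (w : ℕ → A) (n : ℕ) :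
    (M₁.prod M₂ Fp).runFrom (M₁.prod M₂ Fp).init w n =
      (M₁.runFrom M₁.init w n, M₂.runFrom M₂.init w n) := by
  induction n with
  | zero => rfl
  | succ n ih => simp only [runFrom, ih]; rfl

theorem Reach.of_prod {M₁ : DBA Q A} {M₂ : DBA Q₂ A} {Fp : Set (Q × Q₂)} {p q : Q × Q₂}
    (h : (M₁.prod M₂ Fp).Reach p q) : M₁.Reach p.1 q.1 ∧ M₂.Reach p.2 q.2 := by
  obtain ⟨u, rfl⟩ := h
  rw [prod_stepList]
  exact ⟨⟨u, rfl⟩, ⟨u, rfl⟩⟩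

theorem Weak.prod_or {M₁ : DBA Q A} {M₂ : DBA Q₂ A} (h₁ : M₁.Weak) (h₂ : M₂.Weak) :
    (M₁.prod M₂ {x | x.1 ∈ M₁.F ∨ x.2 ∈ M₂.F}).Weak := fun _ _ ⟨hpq, hqp⟩ =>
  or_congr (h₁ _ _ ⟨hpq.of_prod.1, hqp.of_prod.1⟩) (h₂ _ _ ⟨hpq.of_prod.2, hqp.of_prod.2⟩)

theorem accepts_prod_or (M₁ : DBA Q A) (M₂ : DBA Q₂ A) (w : ℕ → A) :
    (M₁.prod M₂ {x | x.1 ∈ M₁.F ∨ x.2 ∈ M₂.F}).Accepts w ↔ M₁.Accepts w ∨ M₂.Accepts w := by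
  simp only [Accepts, acceptsFrom_iff_frequently, prod_runFrom]
  exact frequently_or_distrib

/-- `R q` plays the role of the language accepted from `q`: reading `a` replaces it by its left
quotient by `a`. -/
def IsResidualFamily (M : DBA Q A) (R : Q → Set (Stream' A)) : Prop :=
  ∀ q a w, w ∈ R (M.step q a) ↔ Stream'.cons a w ∈ R q

variable {M : DBA Q A} {R : Q → Set (Stream' A)}

theorem IsResidualFamily.compl (hR : M.IsResidualFamily R) :
    M.IsResidualFamily fun q => (R q)ᶜ :=
  fun q a w => not_congr (hR q a w)

theorem IsResidualFamily.mem_runFrom_iff (hR : M.IsResidualFamily R) (q : Q) (w : Stream' A)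
    (n : ℕ) (w' : Stream' A) : w' ∈ R (M.runFrom q w n) ↔ w.take n ++ₛ w' ∈ R q := by
  induction n generalizing w' with
  | zero => rfl
  | succ n ih =>
    refine (hR _ _ _).trans <| (ih _).trans ?_
    rw [Stream'.take_succ', Stream'.append_append_stream]
    rfl

end DBA

namespace DWARecognizable

variable {A : Type} {L L₁ L₂ : Set (ℕ → A)}

theorem compl (h : DWARecognizable L) : DWARecognizable Lᶜ := by
  obtain ⟨Q, _, M, hM, hL⟩ := h
  exact ⟨Q, inferInstance, _, hM.compl, fun w => (hM.accepts_compl_iff w).trans (hL w).not⟩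

theorem union (h₁ : DWARecognizable L₁) (h₂ : DWARecognizable L₂) :
    DWARecognizable (L₁ ∪ L₂) := by
  obtain ⟨Q₁, _, M₁, hM₁, hL₁⟩ := h₁
  obtain ⟨Q₂, _, M₂, hM₂, hL₂⟩ := h₂
  exact ⟨Q₁ × Q₂, inferInstance, _, hM₁.prod_or hM₂,
    fun w => (M₁.accepts_prod_or M₂ w).trans (or_congr (hL₁ w) (hL₂ w))⟩

theorem inter (h₁ : DWARecognizable L₁) (h₂ : DWARecognizable L₂) :
    DWARecognizable (L₁ ∩ L₂) := by
  simpa using (h₁.compl.union h₂.compl).compl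

theorem of_boolCombOf {B : Set (Set (ℕ → A))} (hB : ∀ L ∈ B, DWARecognizable L)
    (h : BoolCombOf B L) : DWARecognizable L := by
  induction h with
  | base hL => exact hB _ hL
  | compl _ ih => exact ih.compl
  | union _ _ ih₁ ih₂ => exact ih₁.union ih₂
  | inter _ _ ih₁ ih₂ => exact ih₁.inter ih₂

end DWARecognizable

namespace DBA.IsResidualFamily

variable {Q A : Type} [Finite Q] {M : DBA Q A} {R : Q → Set (Stream' A)}

theorem dwaRecognizable_of_isGuaranteeLang (hR : M.IsResidualFamily R)
    (hL : IsGuaranteeLang (R M.init)) : DWARecognizable (R M.init) := by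
  have : Fintype Q := Fintype.ofFinite Q
  let N : DBA Q A := ⟨M.init, M.step, {q | R q = Set.univ}⟩
  have hN : ∀ q a, q ∈ N.F → N.step q a ∈ N.F := fun q a (hq : R q = _) =>
    Set.eq_univ_of_forall fun w => (hR q a w).2 (hq ▸ trivial)
  refine ⟨Q, inferInstance, N, weak_of_forall_step_mem hN, fun w => ?_⟩
  refine ((acceptsFrom_iff_exists_of_forall_step_mem hN _ w).trans ?_).trans
    (hL.mem_iff_exists_forall_append w).symm
  simp only [N, runFrom_mk_step, Set.mem_ofPred_eq, Set.eq_univ_iff_forall]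
  exact exists_congr fun n => forall_congr' (hR.mem_runFrom_iff M.init w n)

theorem dwaRecognizable_of_isSafetyLang (hR : M.IsResidualFamily R)
    (hL : IsSafetyLang (R M.init)) : DWARecognizable (R M.init) :=
  compl_compl (R M.init) ▸ (hR.compl.dwaRecognizable_of_isGuaranteeLang hL).compl

end DBA.IsResidualFamily

namespace NBA

variable {Q A : Type}

def AcceptsFrom (M : NBA Q A) (S : Set Q) (w : ℕ → A) : Prop :=
  ∃ r : ℕ → Q, r 0 ∈ S ∧ (∀ n, r (n + 1) ∈ M.step (r n) (w n)) ∧ ∀ N, ∃ n, N ≤ n ∧ r n ∈ M.F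

def powersetDBA (M : NBA Q A) : DBA (Set Q) A :=
  ⟨M.init, fun S a => {q' | ∃ q ∈ S, q' ∈ M.step q a}, ∅⟩

theorem acceptsFrom_cons_iff (M : NBA Q A) (S : Set Q) (a : A) (w : Stream' A) :
    M.AcceptsFrom S (Stream'.cons a w) ↔ M.AcceptsFrom (M.powersetDBA.step S a) w := by
  constructor
  · rintro ⟨r, h₀, hr, hF⟩
    refine ⟨fun n => r (n + 1), ⟨r 0, h₀, hr 0⟩, fun n => hr (n + 1), fun N => ?_⟩
    obtain ⟨n, hn, hnF⟩ := hF (N + 1)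
    obtain ⟨k, rfl⟩ : ∃ k, n = k + 1 := ⟨n - 1, by omega⟩
    exact ⟨k, by omega, hnF⟩
  · rintro ⟨r, ⟨q, hq, hq₀⟩, hr, hF⟩
    refine ⟨Stream'.cons q r, hq, fun n => ?_, fun N => ?_⟩
    · cases n with
      | zero => exact hq₀
      | succ n => exact hr n
    · obtain ⟨n, hn, hnF⟩ := hF N
      exact ⟨n + 1, by omega, hnF⟩

theorem isResidualFamily_powersetDBA (M : NBA Q A) :
    M.powersetDBA.IsResidualFamily fun S => {w | M.AcceptsFrom S w} :=
  fun S a w => (M.acceptsFrom_cons_iff S a w).symm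

end NBA

theorem OmegaRegular.exists_isResidualFamily {A : Type} {L : Set (ℕ → A)}
    (hL : OmegaRegular L) : ∃ (Q : Type) (_ : Finite Q) (M : DBA Q A)
      (R : Q → Set (Stream' A)), M.IsResidualFamily R ∧ R M.init = L := by
  obtain ⟨Q, _, M, hM⟩ := hL
  exact ⟨Set Q, inferInstance, M.powersetDBA, _, M.isResidualFamily_powersetDBA, Set.ext hM⟩

theorem DWARecognizable.of_omegaRegular {A : Type} {L : Set (ℕ → A)} (hr : OmegaRegular L)
    (h : IsGuaranteeLang L ∨ IsSafetyLang L) : DWARecognizable L := by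
  obtain ⟨Q, _, M, R, hR, rfl⟩ := hr.exists_isResidualFamily
  exact h.elim hR.dwaRecognizable_of_isGuaranteeLang hR.dwaRecognizable_of_isSafetyLang

theorem stmt11_general {A : Type} (L : Set (ℕ → A))
    (h : BoolCombOf
      {L' : Set (ℕ → A) | (IsGuaranteeLang L' ∨ IsSafetyLang L') ∧ OmegaRegular L'} L) :
    DWARecognizable L :=
  DWARecognizable.of_boolCombOf (fun _ hL => .of_omegaRegular hL.2 hL.1) h

/-- every obligation language — a finite Boolean combination of
ω-regular safety and guarantee languages — is recognized by a deterministic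
weak Büchi automaton. -/
theorem stmt11 {A : Type} [Fintype A] (L : Set (ℕ → A))
    (h : BoolCombOf
      {L' : Set (ℕ → A) | (IsGuaranteeLang L' ∨ IsSafetyLang L') ∧ OmegaRegular L'} L) :
    DWARecognizable L :=
  stmt11_general L h
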